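/- Let r be a positive integer and d, t divisors of r. Then (1/r^s) Σ_{m=1}^{r^s} c_d^s(m) c_t^s(m) equals Φ_s(d^s) if d = t, and 0 otherwise. -/

import Mathlib

open Finset

/-- Generalized s-GCD `(a,b)_s`: the largest `l^s` dividing both `a` and `b`. -/
def sgcd (s a b : ℕ) : ℕ :=
  (Nat.findGreatest (fun l => l ^ s ∣ a ∧ l ^ s ∣ b) (Nat.gcd a b)) ^ s

/-- Klee's function `Φ_s(n)`. -/
def klee (s n : ℕ) : ℕ := ((Finset.Icc 1 n).filter (fun m => sgcd s m n = 1)).card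

/-- Cohen–Ramanujan sum (exponential form). -/
noncomputable def CRsum (s r n : ℕ) : ℂ :=
  ∑ a ∈ (Finset.Icc 1 (r ^ s)).filter (fun a => sgcd s a (r ^ s) = 1),
    Complex.exp (2 * Real.pi * Complex.I * n * a / (r ^ s))

/-- Cohen–Ramanujan sum (divisor form). -/
def CRsumD (s r n : ℕ) : ℤ :=
  ∑ d ∈ r.divisors.filter (fun d => d ^ s ∣ n),
    ArithmeticFunction.moebius (r / d) * (d : ℤ) ^ s

/-- `τ_s(m)`: number of s-th powers dividing `m`. -/
def taus (s m : ℕ) : ℕ := ((Finset.Icc 1 m).filter (fun l => l ^ s ∣ m)).card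

/-- Jordan totient via tuples. -/
def jordanT (s r : ℕ) : ℕ :=
  (Finset.univ.filter (fun v : Fin s → Fin r =>
    Nat.gcd (Finset.univ.gcd (fun i => (v i : ℕ))) r = 1)).card

/-! Expanding the product, the sum over `m` becomes a complete sum of the character
`m ↦ e(m (a / d^s + b / t^s))` over a common period `r^s`; it is `r^s` or `0` according as
`a / d^s + b / t^s` is an integer. For `a`, `b` that are `s`-coprime to `d^s`, `t^s`, integrality
forces `d^s ∣ a t^s`, hence `d ∣ t`, and symmetrically `t ∣ d`. When `d = t`, each `a` is paired
with the single `b ∈ [1, d^s]` congruent to `-a`, which is again `s`-coprime to `d^s`; so exactly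
`Φ_s(d^s)` pairs contribute. -/

open Complex

lemma sgcd_eq_one_iff {s a n : ℕ} (hs : s ≠ 0) (hn : n ≠ 0) :
    sgcd s a n = 1 ↔ ∀ l, l ^ s ∣ a → l ^ s ∣ n → l = 1 := by
  have hg : 0 < a.gcd n := Nat.gcd_pos_of_pos_right a (Nat.pos_of_ne_zero hn)
  rw [sgcd, pow_eq_one_iff_left hs, Nat.findGreatest_eq_iff]
  constructor
  · rintro ⟨-, -, hmax⟩ l hla hln
    have hl0 : l ≠ 0 := by rintro rfl; simp [zero_pow hs, hn] at hln
    have hl : l ≤ a.gcd n :=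
      (Nat.le_self_pow hs l).trans (Nat.le_of_dvd hg (Nat.dvd_gcd hla hln))
    by_contra hl1
    exact hmax (by omega) hl ⟨hla, hln⟩
  · intro h
    exact ⟨hg, fun _ => by simp, fun l hl _ hP => absurd (h l hP.1 hP.2) hl.ne'⟩

lemma sgcd_eq_one_iff_of_dvd_add {s a b n : ℕ} (hs : s ≠ 0) (hn : n ≠ 0) (h : n ∣ a + b) :
    sgcd s a n = 1 ↔ sgcd s b n = 1 := by
  rw [sgcd_eq_one_iff hs hn, sgcd_eq_one_iff hs hn]
  refine forall_congr' fun l => ⟨fun H hlb hln => H ?_ hln, fun H hla hln => H ?_ hln⟩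
  · exact (Nat.dvd_add_left hlb).mp (hln.trans h)
  · exact (Nat.dvd_add_right hla).mp (hln.trans h)

/-- Cancelling `gcd(d, t)` leaves `(d / gcd)^s ∣ a`, an `s`-th power common to `a` and `d^s`. -/
lemma dvd_of_sgcd_eq_one_of_pow_dvd_mul {s a d t : ℕ} (hs : s ≠ 0) (hd : d ≠ 0)
    (ha : sgcd s a (d ^ s) = 1) (hdvd : d ^ s ∣ a * t ^ s) : d ∣ t := by
  obtain ⟨g, d', t', hg, hcop, rfl, rfl⟩ := Nat.exists_coprime' (Nat.gcd_pos_of_pos_left t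
    (Nat.pos_of_ne_zero hd))
  have hd' : d' ^ s ∣ a := by
    rw [mul_pow, mul_pow, ← mul_assoc] at hdvd
    exact (Nat.Coprime.pow s s hcop).dvd_of_dvd_mul_right
      (Nat.dvd_of_mul_dvd_mul_right (pow_pos hg s) hdvd)
  have h1 : d' = 1 :=
    (sgcd_eq_one_iff hs (pow_ne_zero s hd)).mp ha d' hd' (by rw [mul_pow]; exact dvd_mul_right _ _)
  simp [h1]

lemma filter_Icc_dvd_add_eq_singleton {n : ℕ} (hn : n ≠ 0) (a : ℕ) :
    (Icc 1 n).filter (fun b => n ∣ a + b) = {n - a % n} := by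
  have hmod : a % n < n := Nat.mod_lt a (Nat.pos_of_ne_zero hn)
  ext b
  simp only [mem_filter, mem_Icc, mem_singleton,
    (((Nat.mod_modEq a n).add_right b).dvd_iff dvd_rfl).symm]
  constructor
  · rintro ⟨⟨hb1, hbn⟩, hdvd⟩
    have := Nat.eq_of_dvd_of_lt_two_mul (by omega) hdvd (by omega)
    omega
  · rintro rfl
    exact ⟨by omega, 1, by omega⟩

lemma sum_Icc_exp_eq_ite {N : ℕ} (hN : N ≠ 0) (k : ℕ) :
    ∑ m ∈ Icc 1 N, cexp (2 * Real.pi * I * k * m / N) = if N ∣ k then (N : ℂ) else 0 := by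
  have hζ := isPrimitiveRoot_exp N hN
  have hterm : ∀ m : ℕ, cexp (2 * Real.pi * I * k * m / N) = (cexp (2 * Real.pi * I / N) ^ k) ^ m :=
    fun m => by rw [← pow_mul, ← exp_nat_mul]; push_cast; ring_nf
  simp_rw [hterm]
  split_ifs with hk
  · simp [(hζ.pow_eq_one_iff_dvd k).2 hk]
  · have hz : cexp (2 * Real.pi * I / N) ^ k ≠ 1 := mt (hζ.pow_eq_one_iff_dvd k).1 hk
    rw [← Ico_add_one_right_eq_Icc, geom_sum_Ico hz (by omega), pow_succ, ← pow_mul,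
      mul_comm k, pow_mul, hζ.pow_eq_one, one_pow, one_mul, pow_one, sub_self, zero_div]

/-- `D * T ∣ a * T + b * D` says that `a / D + b / T` is an integer. -/
lemma sum_Icc_exp_mul_exp {N D T : ℕ} (hN : N ≠ 0) (hD : D ∣ N) (hT : T ∣ N) (a b : ℕ) :
    ∑ m ∈ Icc 1 N, cexp (2 * Real.pi * I * m * a / D) * cexp (2 * Real.pi * I * m * b / T)
      = if D * T ∣ a * T + b * D then (N : ℂ) else 0 := by
  obtain ⟨u, hu⟩ := hD
  obtain ⟨v, hv⟩ := hT
  have hD0 : D ≠ 0 := left_ne_zero_of_mul (hu ▸ hN)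
  have hT0 : T ≠ 0 := left_ne_zero_of_mul (hv ▸ hN)
  have hexp : ∀ m : ℕ, cexp (2 * Real.pi * I * m * a / D) * cexp (2 * Real.pi * I * m * b / T)
      = cexp (2 * Real.pi * I * (a * u + b * v : ℕ) * m / N) := fun m => by
    rw [← exp_add]
    congr 1
    have hu' : (N : ℂ) = D * u := by exact_mod_cast hu
    have hv' : (N : ℂ) = T * v := by exact_mod_cast hv
    rw [div_add_div _ _ (by exact_mod_cast hD0) (by exact_mod_cast hT0),
      div_eq_div_iff (by exact_mod_cast mul_ne_zero hD0 hT0) (by exact_mod_cast hN)]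
    push_cast
    linear_combination (2 * Real.pi * I * m * a * T) * hu' + (2 * Real.pi * I * m * b * D) * hv'
  have hcond : N ∣ a * u + b * v ↔ D * T ∣ a * T + b * D := by
    have hscale : (a * u + b * v) * (D * T) = (a * T + b * D) * N :=
      calc _ = a * T * (D * u) + b * D * (T * v) := by ring
        _ = _ := by rw [← hu, ← hv, add_mul]
    rw [← Nat.mul_dvd_mul_iff_right (by positivity : 0 < D * T), hscale, mul_comm N,
      Nat.mul_dvd_mul_iff_right (Nat.pos_of_ne_zero hN)]
  simp_rw [hexp, sum_Icc_exp_eq_ite hN, hcond]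

def sReducedResidues (s n : ℕ) : Finset ℕ := (Icc 1 n).filter (fun a => sgcd s a n = 1)

lemma card_filter_dvd_add_sReducedResidues {s n a : ℕ} (hs : s ≠ 0) (hn : n ≠ 0)
    (ha : a ∈ sReducedResidues s n) : #{b ∈ sReducedResidues s n | n ∣ a + b} = 1 := by
  rw [sReducedResidues, mem_filter] at ha
  have hfilter : {b ∈ Icc 1 n | sgcd s b n = 1 ∧ n ∣ a + b} = {b ∈ Icc 1 n | n ∣ a + b} :=
    filter_congr fun b _ => ⟨And.right, fun h => ⟨(sgcd_eq_one_iff_of_dvd_add hs hn h).mp ha.2, h⟩⟩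
  rw [sReducedResidues, filter_filter, hfilter, filter_Icc_dvd_add_eq_singleton hn, card_singleton]

lemma sum_sum_ite_dvd_add_sReducedResidues {M : Type*} [AddCommMonoid M] {s n : ℕ}
    (hs : s ≠ 0) (hn : n ≠ 0) (c : M) :
    ∑ a ∈ sReducedResidues s n, ∑ b ∈ sReducedResidues s n, (if n ∣ a + b then c else 0)
      = #(sReducedResidues s n) • c := by
  rw [card_eq_sum_ones, sum_smul]
  refine sum_congr rfl fun a ha => ?_
  rw [← sum_filter, sum_const, card_filter_dvd_add_sReducedResidues hs hn ha]

lemma not_pow_mul_pow_dvd_add_of_ne {s d t a b : ℕ} (hs : s ≠ 0) (hd : d ≠ 0) (ht : t ≠ 0)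
    (hdt : d ≠ t) (ha : a ∈ sReducedResidues s (d ^ s)) (hb : b ∈ sReducedResidues s (t ^ s)) :
    ¬ d ^ s * t ^ s ∣ a * t ^ s + b * d ^ s := by
  intro hdvd
  have hd_dvd : d ∣ t := dvd_of_sgcd_eq_one_of_pow_dvd_mul hs hd (mem_filter.mp ha).2
    ((Nat.dvd_add_left (dvd_mul_left _ _)).mp ((dvd_mul_right _ _).trans hdvd))
  have ht_dvd : t ∣ d := dvd_of_sgcd_eq_one_of_pow_dvd_mul hs ht (mem_filter.mp hb).2
    ((Nat.dvd_add_right (dvd_mul_left _ _)).mp ((dvd_mul_left _ _).trans hdvd))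
  exact hdt (Nat.dvd_antisymm hd_dvd ht_dvd)

lemma sum_CRsum_mul_CRsum {s r d t : ℕ} (hr : r ≠ 0) (hd : d ∣ r) (ht : t ∣ r) :
    ∑ m ∈ Icc 1 (r ^ s), CRsum s d m * CRsum s t m
      = ∑ a ∈ sReducedResidues s (d ^ s), ∑ b ∈ sReducedResidues s (t ^ s),
          if d ^ s * t ^ s ∣ a * t ^ s + b * d ^ s then (r : ℂ) ^ s else 0 := by
  simp only [CRsum, sum_mul_sum]
  rw [sum_comm]
  refine sum_congr rfl fun a _ => ?_
  rw [sum_comm]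
  refine sum_congr rfl fun b _ => ?_
  exact_mod_cast sum_Icc_exp_mul_exp (pow_ne_zero s hr) (pow_dvd_pow_of_dvd hd s)
    (pow_dvd_pow_of_dvd ht s) a b

theorem CRsum_orthogonality (s r d t : ℕ) (hs : 0 < s) (hr : 0 < r)
    (hd : d ∣ r) (ht : t ∣ r) :
    (1 / ((r : ℂ) ^ s)) * ∑ m ∈ Finset.Icc 1 (r ^ s), CRsum s d m * CRsum s t m
      = if d = t then (klee s (d ^ s) : ℂ) else 0 := by
  have hd0 : d ≠ 0 := ne_zero_of_dvd_ne_zero hr.ne' hd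
  have ht0 : t ≠ 0 := ne_zero_of_dvd_ne_zero hr.ne' ht
  rw [sum_CRsum_mul_CRsum hr.ne' hd ht]
  split_ifs with hdt
  · subst hdt
    simp_rw [← add_mul, Nat.mul_dvd_mul_iff_right (pow_pos (Nat.pos_of_ne_zero hd0) s)]
    rw [sum_sum_ite_dvd_add_sReducedResidues hs.ne' (pow_ne_zero s hd0), nsmul_eq_mul, klee,
      ← sReducedResidues, one_div_mul_eq_div,
      mul_div_cancel_right₀ _ (pow_ne_zero s (Nat.cast_ne_zero.mpr hr.ne'))]
  · rw [sum_eq_zero fun a ha => sum_eq_zero fun b hb =>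
      if_neg (not_pow_mul_pow_dvd_add_of_ne hs.ne' hd0 ht0 hdt ha hb), mul_zero]
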